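/- Suppose δ̄₃† κ² < 1/4 and κ² ω < 1. Then the Wilks-type lower bound holds: 2 L(υ̃) − 2 L(υ*) + ‖F^{-1/2} ξ‖² ≥ − (ω / (1 − κ² ω)) ‖D F^{-1} ξ‖². -/

import Mathlib

/-!
Put `S = F^{1/2}`, `η = F^{-1/2} ξ` and `u = υ̃ - υ*`, so that `∇f(υ̃) = -ξ` and
`⟪ξ, u⟫ = ⟪η, S u⟫`. Convexity makes `t ↦ ⟪∇f(υ* + t u), u⟫` nondecreasing. On the sphere
`‖S v‖ = 4r/3` the bound on `δ̄₃†` gives `⟪∇f(υ* + v), v⟫ ≥ (1 - δ̄₃† κ²) ‖S v‖² > r ‖S v‖`,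
while at `v = u` the same pairing is `-⟪η, S u⟫ ≤ r ‖S u‖`; comparing the two along the ray
through `u` shows `‖S u‖ ≤ 4r/3`. In that ball the bound on `ω` gives
`2 (f(υ̃) - f(υ*)) ≥ ‖S u‖² - ω ‖D u‖²`, so the left-hand side is at least
`‖S u + η‖² - ω ‖D u‖²`, and `‖D u‖ ≤ κ ‖S u + η‖ + ‖D F⁻¹ ξ‖` (as `S F⁻¹ ξ = η`) leaves a
quadratic in `‖S u + η‖` whose minimum is the right-hand side.
-/

open MeasureTheory RealInnerProductSpace

/-- Application of a matrix to a vector in Euclidean space. -/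
noncomputable def mApp {p q : ℕ} (M : Matrix (Fin q) (Fin p) ℝ)
    (v : EuclideanSpace ℝ (Fin p)) : EuclideanSpace ℝ (Fin q) :=
  Matrix.toEuclideanLin M v

/-- Operator norm of (the Euclidean linear map induced by) a matrix. -/
noncomputable def mopNorm {p q : ℕ} (M : Matrix (Fin q) (Fin p) ℝ) : ℝ :=
  ‖(LinearMap.toContinuousLinearMap (Matrix.toEuclideanLin M))‖

/-- The positive semidefinite square root of a positive semidefinite matrix
(the definition of `Matrix.PosSemidef.sqrt` in the older Mathlib). -/
noncomputable def psdSqrt {n : Type*} [Fintype n] [DecidableEq n] {A : Matrix n n ℝ}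
    (hA : A.PosSemidef) : Matrix n n ℝ :=
  (hA.1.eigenvectorUnitary : Matrix n n ℝ) * Matrix.diagonal ((↑) ∘ (√·) ∘ hA.1.eigenvalues) *
    (star hA.1.eigenvectorUnitary : Matrix n n ℝ)

open Matrix

section MatrixAction

variable {k m n : ℕ}

lemma mApp_mul (M : Matrix (Fin k) (Fin m) ℝ) (N : Matrix (Fin m) (Fin n) ℝ)
    (u : EuclideanSpace ℝ (Fin n)) : mApp (M * N) u = mApp M (mApp N u) := by
  simp [mApp]

lemma mApp_sub_left (M N : Matrix (Fin m) (Fin n) ℝ) (u : EuclideanSpace ℝ (Fin n)) :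
    mApp (M - N) u = mApp M u - mApp N u := by
  simp [mApp]

lemma mApp_smul_left (c : ℝ) (M : Matrix (Fin m) (Fin n) ℝ) (u : EuclideanSpace ℝ (Fin n)) :
    mApp (c • M) u = c • mApp M u := by
  simp [mApp]

lemma norm_mApp_le (M : Matrix (Fin m) (Fin n) ℝ) (u : EuclideanSpace ℝ (Fin n)) :
    ‖mApp M u‖ ≤ mopNorm M * ‖u‖ :=
  (LinearMap.toContinuousLinearMap (toEuclideanLin M)).le_opNorm u

lemma mApp_nonsing_inv_mApp {M : Matrix (Fin n) (Fin n) ℝ} (hM : IsUnit M)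
    (u : EuclideanSpace ℝ (Fin n)) : mApp M⁻¹ (mApp M u) = u := by
  rw [← mApp_mul, nonsing_inv_mul _ ((isUnit_iff_isUnit_det M).mp hM)]
  simp [mApp]

lemma norm_le_mopNorm_inv_mul {M : Matrix (Fin n) (Fin n) ℝ} (hM : IsUnit M)
    (u : EuclideanSpace ℝ (Fin n)) : ‖u‖ ≤ mopNorm M⁻¹ * ‖mApp M u‖ := by
  simpa only [mApp_nonsing_inv_mApp hM] using norm_mApp_le M⁻¹ (mApp M u)

lemma abs_inner_mApp_self_le (M : Matrix (Fin n) (Fin n) ℝ) (u : EuclideanSpace ℝ (Fin n)) :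
    |⟪mApp M u, u⟫| ≤ mopNorm M * ‖u‖ ^ 2 := calc
  |⟪mApp M u, u⟫| ≤ ‖mApp M u‖ * ‖u‖ := abs_real_inner_le_norm _ _
  _ ≤ mopNorm M * ‖u‖ * ‖u‖ := mul_le_mul_of_nonneg_right (norm_mApp_le M u) (norm_nonneg u)
  _ = mopNorm M * ‖u‖ ^ 2 := by ring

lemma Matrix.IsHermitian.inner_mApp_left {M : Matrix (Fin n) (Fin n) ℝ} (hM : M.IsHermitian)
    (u v : EuclideanSpace ℝ (Fin n)) : ⟪mApp M u, v⟫ = ⟪u, mApp M v⟫ :=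
  isSymmetric_toEuclideanLin_iff.mpr hM u v

lemma Matrix.PosSemidef.inner_mApp_self_nonneg {M : Matrix (Fin n) (Fin n) ℝ}
    (hM : M.PosSemidef) (u : EuclideanSpace ℝ (Fin n)) : 0 ≤ ⟪mApp M u, u⟫ :=
  (isPositive_toEuclideanLin_iff.mpr hM).inner_nonneg_left u

section PsdSqrt

variable {ι : Type*} [Fintype ι] [DecidableEq ι]

lemma psdSqrt_mul_self {A : Matrix ι ι ℝ} (hA : A.PosSemidef) : psdSqrt hA * psdSqrt hA = A := by
  set U : Matrix ι ι ℝ := (hA.1.eigenvectorUnitary : Matrix ι ι ℝ)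
  set Λ : Matrix ι ι ℝ := diagonal ((↑) ∘ (√·) ∘ hA.1.eigenvalues)
  have hU : star U * U = 1 := by simp [U]
  have hΛ : Λ * Λ = diagonal ((↑) ∘ hA.1.eigenvalues) := by
    rw [diagonal_mul_diagonal]
    congr 1
    funext i
    simp [Real.mul_self_sqrt (hA.eigenvalues_nonneg i)]
  calc psdSqrt hA * psdSqrt hA = U * (Λ * (star U * U) * Λ) * star U := by
        simp only [psdSqrt, U, Λ, Matrix.mul_assoc]
    _ = A := by
        rw [hU, Matrix.mul_one, hΛ]
        conv_rhs => rw [hA.1.spectral_theorem, Unitary.conjStarAlgAut_apply]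
        rfl

lemma psdSqrt_isHermitian {A : Matrix ι ι ℝ} (hA : A.PosSemidef) : (psdSqrt hA).IsHermitian := by
  simp [psdSqrt, IsHermitian, Matrix.mul_assoc, star_eq_conjTranspose]

lemma isUnit_psdSqrt {A : Matrix ι ι ℝ} (hA : A.PosDef) : IsUnit (psdSqrt hA.posSemidef) := by
  rw [isUnit_iff_isUnit_det]
  refine isUnit_of_mul_isUnit_left (y := (psdSqrt hA.posSemidef).det) ?_
  rw [← det_mul, psdSqrt_mul_self]
  exact (isUnit_iff_isUnit_det A).mp hA.isUnit

end PsdSqrt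

lemma inner_mApp_eq_norm_psdSqrt_sq {A : Matrix (Fin n) (Fin n) ℝ} (hA : A.PosSemidef)
    (u : EuclideanSpace ℝ (Fin n)) : ⟪mApp A u, u⟫ = ‖mApp (psdSqrt hA) u‖ ^ 2 := by
  rw [← real_inner_self_eq_norm_sq, (psdSqrt_isHermitian hA).inner_mApp_left, ← mApp_mul,
    psdSqrt_mul_self, real_inner_comm]

lemma norm_mApp_le_of_posSemidef_sub {A D : Matrix (Fin n) (Fin n) ℝ} (hA : A.PosSemidef)
    (hD : D.IsHermitian) {κ : ℝ} (hκ : 0 ≤ κ) (hAD : (κ ^ 2 • A - D * D).PosSemidef)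
    (u : EuclideanSpace ℝ (Fin n)) : ‖mApp D u‖ ≤ κ * ‖mApp (psdSqrt hA) u‖ := by
  have h := hAD.inner_mApp_self_nonneg u
  rw [mApp_sub_left, mApp_smul_left, inner_sub_left, real_inner_smul_left, mApp_mul,
    hD.inner_mApp_left, real_inner_self_eq_norm_sq, inner_mApp_eq_norm_psdSqrt_sq hA] at h
  refine (pow_le_pow_iff_left₀ (norm_nonneg _) (by positivity) two_ne_zero).mp ?_
  linarith [mul_pow κ ‖mApp (psdSqrt hA) u‖ 2]

lemma inner_eq_inner_mApp_psdSqrt {A : Matrix (Fin n) (Fin n) ℝ} (hA : A.PosDef)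
    (ξ u : EuclideanSpace ℝ (Fin n)) :
    ⟪ξ, u⟫ = ⟪mApp (psdSqrt hA.posSemidef)⁻¹ ξ, mApp (psdSqrt hA.posSemidef) u⟫ := by
  rw [(psdSqrt_isHermitian hA.posSemidef).inv.inner_mApp_left,
    mApp_nonsing_inv_mApp (isUnit_psdSqrt hA)]

lemma mApp_psdSqrt_mApp_inv {A : Matrix (Fin n) (Fin n) ℝ} (hA : A.PosDef)
    (ξ : EuclideanSpace ℝ (Fin n)) :
    mApp (psdSqrt hA.posSemidef) (mApp A⁻¹ ξ) = mApp (psdSqrt hA.posSemidef)⁻¹ ξ := by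
  have hS := (isUnit_iff_isUnit_det _).mp (isUnit_psdSqrt hA)
  set S := psdSqrt hA.posSemidef
  have hSS : S * S = A := psdSqrt_mul_self hA.posSemidef
  rw [← mApp_mul, ← hSS, Matrix.mul_inv_rev, ← Matrix.mul_assoc, mul_nonsing_inv _ hS,
    Matrix.one_mul]

end MatrixAction

section Calculus

open Metric

variable {E : Type*} [NormedAddCommGroup E] [InnerProductSpace ℝ E] {f : E → ℝ}

theorem ContDiff.exists_lipschitzOnWith_fderiv_closedBall [ProperSpace E]
    (hf : ContDiff ℝ 2 f) (x : E) (R : ℝ) :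
    ∃ K, LipschitzOnWith K (fderiv ℝ f) (closedBall x R) :=
  ((hf.fderiv_right (m := 1) le_rfl).contDiffOn).exists_lipschitzOnWith one_ne_zero
    (convex_closedBall x R) (isCompact_closedBall x R)

variable [CompleteSpace E]

theorem ConvexOn.monotone_inner_gradient_add_smul (hconv : ConvexOn ℝ Set.univ f)
    (hf : Differentiable ℝ f) (x u : E) :
    Monotone fun t : ℝ => ⟪gradient f (x + t • u), u⟫ := by
  have hderiv (t : ℝ) :
      HasDerivAt (fun t : ℝ => f (x + t • u)) ⟪gradient f (x + t • u), u⟫ t := by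
    rw [inner_gradient_left]
    exact (hf _).hasFDerivAt.comp_hasDerivAt t
      (by simpa using ((hasDerivAt_id t).smul_const u).const_add x)
  have hline : (fun t : ℝ => f (x + t • u)) = f ∘ AffineMap.lineMap x (x + u) := by
    funext t
    simp [AffineMap.lineMap_apply, add_comm]
  have hφ : ConvexOn ℝ Set.univ fun t : ℝ => f (x + t • u) := by
    rw [hline]
    exact hconv.comp_affineMap _
  intro s t hst
  simpa only [(hderiv _).deriv] using
    hφ.monotoneOn_deriv (fun t _ => (hderiv t).differentiableAt) trivial trivial hst

theorem gradient_eq_neg_of_forall_le_add_inner {x ξ : E} (hf : DifferentiableAt ℝ f x)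
    (hmin : ∀ y, f x + ⟪ξ, x⟫ ≤ f y + ⟪ξ, y⟫) : gradient f x = -ξ := by
  have hzero := (IsLocalMin.hasFDerivAt_eq_zero (Filter.Eventually.of_forall hmin)
    (hf.hasFDerivAt.add (innerSL ℝ ξ).hasFDerivAt))
  refine ext_inner_right ℝ fun v => ?_
  have := DFunLike.congr_fun hzero v
  simp only [_root_.add_apply, innerSL_apply_apply, _root_.zero_apply] at this
  rw [inner_gradient_left, inner_neg_left]
  linarith

variable {x u : E} {K : NNReal} {R : ℝ}

theorem abs_sub_sub_inner_gradient_le (hf : Differentiable ℝ f)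
    (hK : LipschitzOnWith K (fderiv ℝ f) (closedBall x R)) (hu : ‖u‖ ≤ R) :
    |f (x + u) - f x - ⟪gradient f x, u⟫| ≤ K * ‖u‖ ^ 2 := by
  have hball : closedBall x ‖u‖ ⊆ closedBall x R := closedBall_subset_closedBall hu
  have hx : x ∈ closedBall x ‖u‖ := mem_closedBall_self (norm_nonneg u)
  have hxu : x + u ∈ closedBall x ‖u‖ := by simp [dist_eq_norm]
  have hbound : ∀ z ∈ closedBall x ‖u‖, ‖fderiv ℝ f z - fderiv ℝ f x‖ ≤ K * ‖u‖ := fun z hz =>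
    (hK.norm_sub_le (hball hz) (hball hx)).trans
      (mul_le_mul_of_nonneg_left (mem_closedBall_iff_norm.mp hz) K.coe_nonneg)
  have := (convex_closedBall x ‖u‖).norm_image_sub_le_of_norm_fderiv_le'
    (fun z _ => hf z) hbound hx hxu
  rw [add_sub_cancel_left, Real.norm_eq_abs, ← inner_gradient_left] at this
  linarith

theorem norm_gradient_sub_le (hK : LipschitzOnWith K (fderiv ℝ f) (closedBall x R))
    (hu : ‖u‖ ≤ R) : ‖gradient f (x + u) - gradient f x‖ ≤ K * ‖u‖ := by
  have hx : x ∈ closedBall x R := mem_closedBall_self ((norm_nonneg u).trans hu)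
  have hxu : x + u ∈ closedBall x R := by simpa [dist_eq_norm] using hu
  simpa [gradient, ← map_sub] using hK.norm_sub_le hxu hx

end Calculus

section Localization

variable {E : Type*} [NormedAddCommGroup E] [InnerProductSpace ℝ E] [CompleteSpace E]
  {f : E → ℝ}

theorem ConvexOn.norm_sub_le_of_lt_inner_gradient (hconv : ConvexOn ℝ Set.univ f)
    (hf : Differentiable ℝ f) {x₀ x₁ ξ η : E} (hx₁ : gradient f x₁ = -ξ) (T : E →ₗ[ℝ] E)
    (hξ : ∀ u, ⟪ξ, u⟫ = ⟪η, T u⟫) {r R : ℝ} (hη : ‖η‖ ≤ r) (hR : 0 < R)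
    (hgrowth : ∀ v, ‖T v‖ = R → r * R < ⟪gradient f (x₀ + v), v⟫) :
    ‖T (x₁ - x₀)‖ ≤ R := by
  by_contra! hlt
  set u := x₁ - x₀
  have hTu : 0 < ‖T u‖ := hR.trans hlt
  set s := R / ‖T u‖
  have hs : s * ‖T u‖ = R := div_mul_cancel₀ _ hTu.ne'
  have hs0 : 0 < s := div_pos hR hTu
  have hTsu : ‖T (s • u)‖ = R := by
    rw [map_smul, norm_smul, Real.norm_of_nonneg hs0.le, hs]
  have hmono := hconv.monotone_inner_gradient_add_smul hf x₀ u ((div_le_one hTu).mpr hlt.le)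
  simp only [one_smul, u, add_sub_cancel, hx₁, inner_neg_left] at hmono
  have hξu : -⟪ξ, u⟫ ≤ r * ‖T u‖ := by
    rw [hξ]
    exact (neg_le_abs _).trans ((abs_real_inner_le_norm _ _).trans
      (mul_le_mul_of_nonneg_right hη (norm_nonneg _)))
  have hgrow := hgrowth _ hTsu
  rw [inner_smul_right] at hgrow
  have hsr : s * (r * ‖T u‖) = r * R := by rw [← hs]; ring
  linarith [mul_le_mul_of_nonneg_left (hmono.trans hξu) hs0.le]

end Localization

section RatioSup

variable {E : Type*} [Zero E] {g d N : E → ℝ} {R : ℝ}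

/-- The junk value `sSup = 0` of an unbounded family is why `le_ratioSup_mul_sq` asks for a
bound `g ≤ C d²`. -/
noncomputable def ratioSup (g d N : E → ℝ) (R : ℝ) : ℝ :=
  sSup {x | ∃ u, u ≠ 0 ∧ N u ≤ R ∧ x = g u / d u ^ 2}

theorem ratioSup_nonneg (hg : ∀ u, 0 ≤ g u) : 0 ≤ ratioSup g d N R :=
  Real.sSup_nonneg fun _ ⟨u, _, _, hx⟩ => hx ▸ div_nonneg (hg u) (sq_nonneg _)

theorem le_ratioSup_mul_sq (hC : ∃ C, ∀ u, N u ≤ R → g u ≤ C * d u ^ 2) (hd0 : d 0 = 0)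
    {u : E} (hu : N u ≤ R) : g u ≤ ratioSup g d N R * d u ^ 2 := by
  obtain ⟨C, hC⟩ := hC
  rcases eq_or_ne (d u) 0 with hdu | hdu
  · simpa [hdu] using hC u hu
  have hbdd : BddAbove {x | ∃ u, u ≠ 0 ∧ N u ≤ R ∧ x = g u / d u ^ 2} := by
    refine ⟨max C 0, ?_⟩
    rintro _ ⟨v, -, hv, rfl⟩
    rcases eq_or_ne (d v) 0 with hdv | hdv
    · simp [hdv]
    rw [div_le_iff₀ (by positivity)]
    exact (hC v hv).trans (mul_le_mul_of_nonneg_right (le_max_left _ _) (sq_nonneg _))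
  have hu0 : u ≠ 0 := by
    rintro rfl
    exact hdu hd0
  exact (div_le_iff₀ (by positivity)).mp (le_csSup hbdd ⟨u, hu0, hu, rfl⟩)

end RatioSup

theorem neg_div_mul_sq_le_sq_sub_mul_sq {ω κ t d s : ℝ} (hω : 0 ≤ ω) (hκω : κ ^ 2 * ω < 1)
    (hd : 0 ≤ d) (hdts : d ≤ κ * t + s) :
    -(ω / (1 - κ ^ 2 * ω)) * s ^ 2 ≤ t ^ 2 - ω * d ^ 2 := by
  have hpos : 0 < 1 - κ ^ 2 * ω := by linarith
  -- completing the square in `t`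
  have hsq : (1 - κ ^ 2 * ω) * (t ^ 2 - ω * (κ * t + s) ^ 2) + ω * s ^ 2 =
      ((1 - κ ^ 2 * ω) * t - ω * κ * s) ^ 2 := by ring
  have hd2 : ω * d ^ 2 ≤ ω * (κ * t + s) ^ 2 :=
    mul_le_mul_of_nonneg_left (pow_le_pow_left₀ hd hdts 2) hω
  rw [neg_mul, div_mul_eq_mul_div, neg_le, le_div_iff₀ hpos]
  nlinarith [sq_nonneg ((1 - κ ^ 2 * ω) * t - ω * κ * s)]

theorem wilks_bound_of_quadratic_minorant {E : Type*} [NormedAddCommGroup E]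
    [InnerProductSpace ℝ E] {S D : E →ₗ[ℝ] E} {ξ η u w : E} {a ω κ : ℝ}
    (hω : 0 ≤ ω) (hκω : κ ^ 2 * ω < 1) (hDS : ∀ v, ‖D v‖ ≤ κ * ‖S v‖)
    (hξ : ⟪ξ, u⟫ = ⟪η, S u⟫) (hw : S w = η) (ha : ‖S u‖ ^ 2 - ω * ‖D u‖ ^ 2 ≤ 2 * a) :
    -(ω / (1 - κ ^ 2 * ω)) * ‖D w‖ ^ 2 ≤ 2 * a + 2 * ⟪ξ, u⟫ + ‖η‖ ^ 2 := by
  have hDu : ‖D u‖ ≤ κ * ‖S u + η‖ + ‖D w‖ := calc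
    ‖D u‖ = ‖D (u + w) - D w‖ := by rw [map_add, add_sub_cancel_right]
    _ ≤ ‖D (u + w)‖ + ‖D w‖ := norm_sub_le _ _
    _ ≤ κ * ‖S u + η‖ + ‖D w‖ := by
      rw [← hw, ← map_add]
      exact add_le_add_left (hDS _) _
  have hsq : ‖S u + η‖ ^ 2 = ‖S u‖ ^ 2 + 2 * ⟪ξ, u⟫ + ‖η‖ ^ 2 := by
    rw [hξ, norm_add_sq_real, real_inner_comm]
  linarith [neg_div_mul_sq_le_sq_sub_mul_sq hω hκω (norm_nonneg _) hDu]

section Wilks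

variable {p : ℕ} {f : EuclideanSpace ℝ (Fin p) → ℝ} {F S D : Matrix (Fin p) (Fin p) ℝ}
  {x u : EuclideanSpace ℝ (Fin p)}

variable (f F) in
/-- `δ₃(x, u)`. -/
noncomputable def taylorRemainder (x u : EuclideanSpace ℝ (Fin p)) : ℝ :=
  f (x + u) - f x - ⟪gradient f x, u⟫ - 1 / 2 * ⟪mApp F u, u⟫

variable (f F) in
/-- `δ₃†(x, u)`. -/
noncomputable def gradientRemainder (x u : EuclideanSpace ℝ (Fin p)) : ℝ :=
  ⟪gradient f (x + u) - gradient f x, u⟫ - ⟪mApp F u, u⟫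

variable (F x) in
theorem ContDiff.exists_abs_taylorRemainder_le (hf : ContDiff ℝ 2 f) (ρ : ℝ) :
    ∃ C, ∀ u, ‖u‖ ≤ ρ → 2 * |taylorRemainder f F x u| ≤ C * ‖u‖ ^ 2 := by
  obtain ⟨K, hK⟩ := hf.exists_lipschitzOnWith_fderiv_closedBall x ρ
  refine ⟨2 * K + mopNorm F, fun u hu => ?_⟩
  have h1 := abs_sub_sub_inner_gradient_le (hf.differentiable two_ne_zero) hK hu
  have h2 := abs_inner_mApp_self_le F u
  have h3 := abs_sub (f (x + u) - f x - ⟪gradient f x, u⟫) (1 / 2 * ⟪mApp F u, u⟫)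
  rw [abs_mul, abs_of_pos (by norm_num : (0 : ℝ) < 1 / 2)] at h3
  rw [taylorRemainder]
  linarith

variable (F x) in
theorem ContDiff.exists_abs_gradientRemainder_le (hf : ContDiff ℝ 2 f) (ρ : ℝ) :
    ∃ C, ∀ u, ‖u‖ ≤ ρ → |gradientRemainder f F x u| ≤ C * ‖u‖ ^ 2 := by
  obtain ⟨K, hK⟩ := hf.exists_lipschitzOnWith_fderiv_closedBall x ρ
  refine ⟨K + mopNorm F, fun u hu => ?_⟩
  have h1 : |⟪gradient f (x + u) - gradient f x, u⟫| ≤ K * ‖u‖ ^ 2 := calc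
    _ ≤ ‖gradient f (x + u) - gradient f x‖ * ‖u‖ := abs_real_inner_le_norm _ _
    _ ≤ K * ‖u‖ * ‖u‖ :=
      mul_le_mul_of_nonneg_right (norm_gradient_sub_le hK hu) (norm_nonneg u)
    _ = K * ‖u‖ ^ 2 := by ring
  have h2 := abs_inner_mApp_self_le F u
  have h3 := abs_sub ⟪gradient f (x + u) - gradient f x, u⟫ ⟪mApp F u, u⟫
  rw [gradientRemainder]
  linarith

theorem exists_le_mul_norm_mApp_sq {g : EuclideanSpace ℝ (Fin p) → ℝ} (hS : IsUnit S)
    (hD : IsUnit D) (hg : ∀ ρ, ∃ C, ∀ u, ‖u‖ ≤ ρ → g u ≤ C * ‖u‖ ^ 2) (R : ℝ) :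
    ∃ C, ∀ u, ‖mApp S u‖ ≤ R → g u ≤ C * ‖mApp D u‖ ^ 2 := by
  obtain ⟨C, hC⟩ := hg (mopNorm S⁻¹ * R)
  refine ⟨max C 0 * mopNorm D⁻¹ ^ 2, fun u hu => ?_⟩
  have hρ : ‖u‖ ≤ mopNorm S⁻¹ * R := (norm_le_mopNorm_inv_mul hS u).trans
    (mul_le_mul_of_nonneg_left hu (norm_nonneg _))
  calc g u ≤ C * ‖u‖ ^ 2 := hC u hρ
    _ ≤ max C 0 * (mopNorm D⁻¹ * ‖mApp D u‖) ^ 2 := by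
      gcongr
      · exact le_max_left _ _
      · exact norm_le_mopNorm_inv_mul hD u
    _ = max C 0 * mopNorm D⁻¹ ^ 2 * ‖mApp D u‖ ^ 2 := by ring

theorem le_mul_sq_of_eq_ratioSup {g : EuclideanSpace ℝ (Fin p) → ℝ} (hS : IsUnit S)
    (hD : IsUnit D) (hg : ∀ ρ, ∃ C, ∀ u, ‖u‖ ≤ ρ → g u ≤ C * ‖u‖ ^ 2) {R ω : ℝ}
    (hu : ‖mApp S u‖ ≤ R) (hω : ω = ratioSup g (‖mApp D ·‖) (‖mApp S ·‖) R) :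
    g u ≤ ω * ‖mApp D u‖ ^ 2 :=
  hω ▸ le_ratioSup_mul_sq (exists_le_mul_norm_mApp_sq hS hD hg R) (by simp [mApp]) hu

theorem one_sub_mul_sq_le_inner_gradient {δ κ : ℝ} (hgrad : gradient f x = 0)
    (hFS : ⟪mApp F u, u⟫ = ‖mApp S u‖ ^ 2) (hDS : ‖mApp D u‖ ≤ κ * ‖mApp S u‖) (hδ : 0 ≤ δ)
    (hrem : |gradientRemainder f F x u| ≤ δ * ‖mApp D u‖ ^ 2) :
    (1 - δ * κ ^ 2) * ‖mApp S u‖ ^ 2 ≤ ⟪gradient f (x + u), u⟫ := by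
  rw [gradientRemainder, hgrad, sub_zero, hFS] at hrem
  have hD2 := mul_le_mul_of_nonneg_left (pow_le_pow_left₀ (norm_nonneg _) hDS 2) hδ
  linarith [neg_abs_le (⟪gradient f (x + u), u⟫ - ‖mApp S u‖ ^ 2), mul_pow κ ‖mApp S u‖ 2]

theorem sq_sub_mul_sq_le_of_taylorRemainder {ω : ℝ} (hgrad : gradient f x = 0)
    (hFS : ⟪mApp F u, u⟫ = ‖mApp S u‖ ^ 2)
    (hrem : 2 * |taylorRemainder f F x u| ≤ ω * ‖mApp D u‖ ^ 2) :
    ‖mApp S u‖ ^ 2 - ω * ‖mApp D u‖ ^ 2 ≤ 2 * (f (x + u) - f x) := by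
  rw [taylorRemainder, hgrad, inner_zero_left, sub_zero, hFS] at hrem
  linarith [neg_abs_le (f (x + u) - f x - 1 / 2 * ‖mApp S u‖ ^ 2)]

end Wilks

theorem wilks_lower_bound_general
    {p : ℕ}
    (f : EuclideanSpace ℝ (Fin p) → ℝ)
    (hconv : ConvexOn ℝ Set.univ f)
    (hf : ContDiff ℝ 2 f)
    (υs : EuclideanSpace ℝ (Fin p))
    (hgrad : gradient f υs = 0)
    (F : Matrix (Fin p) (Fin p) ℝ) (hF : F.PosDef)
    (ξ υt : EuclideanSpace ℝ (Fin p))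
    (hmin : ∀ υ : EuclideanSpace ℝ (Fin p), f υt + ⟪ξ, υt⟫ ≤ f υ + ⟪ξ, υ⟫)
    (D : Matrix (Fin p) (Fin p) ℝ) (hD : D.PosDef)
    (κ : ℝ) (hκ : 0 < κ)
    (hLoew : (κ ^ 2 • F - D * D).PosSemidef)
    (r : ℝ) (hrpos : 0 < r)
    (hξr : ‖mApp (psdSqrt hF.posSemidef)⁻¹ ξ‖ ≤ r)
    (ω δ3 : ℝ)
    (hω : ω = sSup {x : ℝ | ∃ u : EuclideanSpace ℝ (Fin p), u ≠ 0 ∧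
      ‖mApp (psdSqrt hF.posSemidef) u‖ ≤ 4 / 3 * r ∧
      x = 2 * |f (υs + u) - f υs - ⟪gradient f υs, u⟫ - 1 / 2 * ⟪mApp F u, u⟫| /
        ‖mApp D u‖ ^ 2})
    (hδ3 : δ3 = sSup {x : ℝ | ∃ u : EuclideanSpace ℝ (Fin p), u ≠ 0 ∧
      ‖mApp (psdSqrt hF.posSemidef) u‖ ≤ 4 / 3 * r ∧
      x = |⟪gradient f (υs + u) - gradient f υs, u⟫ - ⟪mApp F u, u⟫| /
        ‖mApp D u‖ ^ 2})
    (hmain : δ3 * κ ^ 2 < 1 / 4) (hω1 : κ ^ 2 * ω < 1) :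
    2 * (f υt + ⟪ξ, υt⟫) - 2 * (f υs + ⟪ξ, υs⟫) + ‖mApp (psdSqrt hF.posSemidef)⁻¹ ξ‖ ^ 2 ≥
      -(ω / (1 - κ ^ 2 * ω)) * ‖mApp D (mApp F⁻¹ ξ)‖ ^ 2 := by
  have hFS := inner_mApp_eq_norm_psdSqrt_sq hF.posSemidef
  have hDS := norm_mApp_le_of_posSemidef_sub hF.posSemidef hD.1 hκ.le hLoew
  have hξS := inner_eq_inner_mApp_psdSqrt hF ξ
  have hSF := mApp_psdSqrt_mApp_inv hF ξ
  have hSunit := isUnit_psdSqrt hF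
  set S := psdSqrt hF.posSemidef
  have hω0 : 0 ≤ ω := hω ▸ ratioSup_nonneg fun _ => by positivity
  have hδ0 : 0 ≤ δ3 := hδ3 ▸ ratioSup_nonneg fun _ => abs_nonneg _
  have hloc : ‖mApp S (υt - υs)‖ ≤ 4 / 3 * r := by
    refine hconv.norm_sub_le_of_lt_inner_gradient (hf.differentiable two_ne_zero)
      (gradient_eq_neg_of_forall_le_add_inner (hf.differentiable two_ne_zero υt) hmin)
      (Matrix.toEuclideanLin S) hξS hξr (by positivity) fun v (hv : ‖mApp S v‖ = _) => ?_
    have hgrowth := one_sub_mul_sq_le_inner_gradient hgrad (hFS v) (hDS v) hδ0 <|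
      le_mul_sq_of_eq_ratioSup hSunit hD.isUnit (hf.exists_abs_gradientRemainder_le F υs) hv.le hδ3
    rw [hv] at hgrowth
    nlinarith [mul_pos (sub_pos.2 hmain) (mul_pos hrpos hrpos)]
  have hquad := sq_sub_mul_sq_le_of_taylorRemainder hgrad (hFS _) <|
    le_mul_sq_of_eq_ratioSup hSunit hD.isUnit (hf.exists_abs_taylorRemainder_le F υs) hloc hω
  rw [add_sub_cancel] at hquad
  have hwilks : -(ω / (1 - κ ^ 2 * ω)) * ‖mApp D (mApp F⁻¹ ξ)‖ ^ 2 ≤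
      2 * (f υt - f υs) + 2 * ⟪ξ, υt - υs⟫ + ‖mApp S⁻¹ ξ‖ ^ 2 :=
    wilks_bound_of_quadratic_minorant (S := Matrix.toEuclideanLin S)
      (D := Matrix.toEuclideanLin D) hω0 hω1 hDS (hξS _) hSF hquad
  rw [inner_sub_right] at hwilks
  linarith

theorem wilks_lower_bound
    {p : ℕ} (hp : 1 ≤ p)
    (f : EuclideanSpace ℝ (Fin p) → ℝ)
    (hconv : ConvexOn ℝ Set.univ f)
    (hf : ContDiff ℝ 2 f)
    (υs : EuclideanSpace ℝ (Fin p))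
    (hgrad : gradient f υs = 0)
    (F : Matrix (Fin p) (Fin p) ℝ) (hF : F.PosDef)
    (hFdef : ∀ u w : EuclideanSpace ℝ (Fin p),
      iteratedFDeriv ℝ 2 f υs ![u, w] = ⟪mApp F u, w⟫)
    (ξ υt : EuclideanSpace ℝ (Fin p))
    (hmin : ∀ υ : EuclideanSpace ℝ (Fin p), f υt + ⟪ξ, υt⟫ ≤ f υ + ⟪ξ, υ⟫)
    (D : Matrix (Fin p) (Fin p) ℝ) (hD : D.PosDef)
    (κ : ℝ) (hκ : 0 < κ)
    (hLoew : (κ ^ 2 • F - D * D).PosSemidef)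
    (r : ℝ) (hrpos : 0 < r)
    (hξr : ‖mApp (psdSqrt hF.posSemidef)⁻¹ ξ‖ ≤ r)
    (ω δ3 : ℝ)
    (hω : ω = sSup {x : ℝ | ∃ u : EuclideanSpace ℝ (Fin p), u ≠ 0 ∧
      ‖mApp (psdSqrt hF.posSemidef) u‖ ≤ 4 / 3 * r ∧
      x = 2 * |f (υs + u) - f υs - ⟪gradient f υs, u⟫ - 1 / 2 * ⟪mApp F u, u⟫| /
        ‖mApp D u‖ ^ 2})
    (hδ3 : δ3 = sSup {x : ℝ | ∃ u : EuclideanSpace ℝ (Fin p), u ≠ 0 ∧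
      ‖mApp (psdSqrt hF.posSemidef) u‖ ≤ 4 / 3 * r ∧
      x = |⟪gradient f (υs + u) - gradient f υs, u⟫ - ⟪mApp F u, u⟫| /
        ‖mApp D u‖ ^ 2})
    (hmain : δ3 * κ ^ 2 < 1 / 4) (hω1 : κ ^ 2 * ω < 1) :
    2 * (f υt + ⟪ξ, υt⟫) - 2 * (f υs + ⟪ξ, υs⟫) + ‖mApp (psdSqrt hF.posSemidef)⁻¹ ξ‖ ^ 2 ≥
      -(ω / (1 - κ ^ 2 * ω)) * ‖mApp D (mApp F⁻¹ ξ)‖ ^ 2 :=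
  wilks_lower_bound_general f hconv hf υs hgrad F hF ξ υt hmin D hD κ hκ hLoew r hrpos hξr ω δ3 hω
    hδ3 hmain hω1
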